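/- Let $(M, Q')$ be a nondegenerate quadratic space over an algebraically closed field $K$ of characteristic $0$ with basis $\{w, v_1, \dots, v_n, w'\}$ in which $Q'$ has block antidiagonal form pairing $w$ with $w'$ and restricting to a nondegenerate form $Q'_0$ on $M_0 = \mathrm{span}(v_1, \dots, v_n)$. Let $\nu : \mathbb{G}_m \to \mathrm{GL}(M)$ be the cocharacter $t \mapsto \mathrm{diag}(t^{-1}, 1, \dots, 1, t)$, fix a maximal torus $T_{\mathrm{SO}(M)}$ of $\mathrm{SO}(M)$ containing $\mathrm{im}\,\nu$ and contained in the Levi of $\nu$, and let $\alpha$ be a positive root of $\mathrm{SO}(M)$ relative to $\nu$ (i.e., a root whose root space lies in $\mathrm{Lie}\,U_{\mathrm{SO}(M),\nu}$). If $\mathfrak{h}$ is a one-dimensional subalgebra of $\mathrm{Lie}\,U_{\mathrm{SO}(M),\nu^{-1}}$ such that (1) $\mathfrak{t} := [\mathfrak{h}, \mathfrak{so}(M)_\alpha]$ is a one-dimensional subalgebra of $\mathfrak{t}_{\mathrm{SO}(M)}$, and (2) $[\mathfrak{t}, \mathfrak{h}] \subseteq \mathfrak{h}$, then $\mathfrak{h}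 = \mathfrak{so}(M)_{-\alpha}$, the root space of $-\alpha$. -/

import Mathlib

section

variable {K M : Type*} [Field K] [AddCommGroup M] [Module K M]

/-- `x` is skew-adjoint with respect to the bilinear form `Bf`,
i.e. lies in the Lie algebra `so(M, Bf)`. -/
def IsSkewAdjEnd (Bf : M →ₗ[K] M →ₗ[K] K) (x : Module.End K M) : Prop :=
  ∀ u v : M, Bf (x u) v + Bf u (x v) = 0

/-- The root space of the linear functional `α` with respect to the torus `t` inside
`so(M, Bf)`. -/
def rootSet (Bf : M →ₗ[K] M →ₗ[K] K) (t : Submodule K (Module.End K M))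
    (α : Module.End K M →ₗ[K] K) : Set (Module.End K M) :=
  {x | IsSkewAdjEnd Bf x ∧ ∀ H ∈ t, ⁅H, x⁆ = α H • x}

end

/-! The derivative `D = dν` is `wedgeEnd Bf w' w`, where `wedgeEnd Bf a b` is the element
`m ↦ B(b, m) a - B(a, m) b` of `so(M)` corresponding to `a ∧ b`. As `D` has eigenvalues `-1, 1, 0`
on `w, w', M₀ = ⟨w, w'⟩ᗮ`, the skew endomorphisms of `ad D`-weight `-1` are the
`X_u = wedgeEnd Bf u w`, those of weight `1` the `Y_u = wedgeEnd Bf u w'` (`u ∈ M₀`), and the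
weights `±2` do not occur. Hence `h = K X_{u₀}`, a root vector `Y` with `H = [X_{u₀}, Y] ≠ 0` is
some `Y_{u₁}`, and `so(M)_{-α}` consists of the `X_x` with `x ∈ M₀` of `t`-weight `η - α`, where
`η` is the weight of `t` on `w'`.

One computes `H = u₁ ∧ u₀ + β D` with `β = B(u₀, u₁)`; if `β = 0` then `H² = 0`, contradicting
semisimplicity. If `u₀` is isotropic, the relations `[H, X] ∈ K X` and `[H, Y] = α(H) Y` make `-β`
the eigenvalue of `H` both on `u₀` and on that weight space, and the `(-β)`-eigenvectors of `H` in
`M₀` are the multiples of `u₀`. Otherwise `u₁ ∈ K u₀` and `t` fixes the anisotropic vector `u₀`;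
any other fixed `x` gives the element `x ∧ u₀`, which centralizes `t`, hence lies in `t`, forcing
`x ∈ K u₀`. In both cases the weight space is `K u₀`, so `so(M)_{-α} = K X_{u₀} = h`. -/

section

attribute [local instance] LieRing.ofAssociativeRing

variable {K M : Type*} [Field K] [AddCommGroup M] [Module K M]

theorem Module.End.bracket_apply (A B : Module.End K M) (m : M) :
    ⁅A, B⁆ m = A (B m) - B (A m) :=
  rfl

theorem Module.End.apply_eigenvector_of_lie_eq_smul {D F : Module.End K M} {c : K}
    (hF : ⁅D, F⁆ = c • F) ⦃μ : K⦄ ⦃m : M⦄ (hm : D m = μ • m) : D (F m) = (μ + c) • F m := by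
  have h := LinearMap.congr_fun hF m
  rw [Module.End.bracket_apply, hm, map_smul, LinearMap.smul_apply] at h
  rw [add_smul, ← h]
  abel

/-- `wedgeEnd Bf a b` is the image of `a ∧ b` under the isomorphism `Λ² M ≃ so(M, Bf)`. -/
def wedgeEnd (Bf : M →ₗ[K] M →ₗ[K] K) : M →ₗ[K] M →ₗ[K] Module.End K M :=
  LinearMap.mk₂ K (fun a b => (Bf b).smulRight a - (Bf a).smulRight b)
    (fun _ _ _ => by
      ext; simp only [LinearMap.sub_apply, LinearMap.smulRight_apply, map_add,
        LinearMap.add_apply]; module)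
    (fun _ _ _ => by
      ext; simp only [LinearMap.sub_apply, LinearMap.smulRight_apply, map_smul,
        LinearMap.smul_apply, smul_eq_mul]; module)
    (fun _ _ _ => by
      ext; simp only [LinearMap.sub_apply, LinearMap.smulRight_apply, map_add,
        LinearMap.add_apply]; module)
    (fun _ _ _ => by
      ext; simp only [LinearMap.sub_apply, LinearMap.smulRight_apply, map_smul,
        LinearMap.smul_apply, smul_eq_mul]; module)

variable {Bf : M →ₗ[K] M →ₗ[K] K}

@[simp]
theorem wedgeEnd_apply (a b m : M) : wedgeEnd Bf a b m = Bf b m • a - Bf a m • b :=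
  rfl

theorem wedgeEnd_swap (a b : M) : wedgeEnd Bf b a = -wedgeEnd Bf a b := by
  ext m
  simp only [wedgeEnd_apply, LinearMap.neg_apply]
  abel

theorem isSkewAdjEnd_wedgeEnd (hsymm : ∀ u v, Bf u v = Bf v u) (a b : M) :
    IsSkewAdjEnd Bf (wedgeEnd Bf a b) := by
  intro u v
  simp only [wedgeEnd_apply, map_sub, map_smul, LinearMap.sub_apply, LinearMap.smul_apply,
    smul_eq_mul]
  rw [hsymm u a, hsymm u b]
  ring

theorem lie_wedgeEnd (hsymm : ∀ u v, Bf u v = Bf v u) {A : Module.End K M}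
    (hA : IsSkewAdjEnd Bf A) (a b : M) :
    ⁅A, wedgeEnd Bf a b⁆ = wedgeEnd Bf (A a) b + wedgeEnd Bf a (A b) := by
  ext m
  have hb : Bf b (A m) = -Bf (A b) m := by rw [hsymm b, hsymm (A b)]; linear_combination hA m b
  have ha : Bf a (A m) = -Bf (A a) m := by rw [hsymm a, hsymm (A a)]; linear_combination hA m a
  simp only [Module.End.bracket_apply, wedgeEnd_apply, LinearMap.add_apply, map_sub, map_smul,
    ha, hb]
  module

theorem IsSkewAdjEnd.add {A B : Module.End K M} (hA : IsSkewAdjEnd Bf A)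
    (hB : IsSkewAdjEnd Bf B) : IsSkewAdjEnd Bf (A + B) := fun u v => by
  simp only [LinearMap.add_apply, map_add]
  linear_combination hA u v + hB u v

theorem IsSkewAdjEnd.lie {A B : Module.End K M} (hA : IsSkewAdjEnd Bf A)
    (hB : IsSkewAdjEnd Bf B) : IsSkewAdjEnd Bf ⁅A, B⁆ := fun u v => by
  simp only [Module.End.bracket_apply, map_sub, LinearMap.sub_apply]
  linear_combination hA (B u) v - hB u (A v) - hB (A u) v + hA u (B v)

theorem IsSkewAdjEnd.eq_neg_of_apply_eq_smul {A : Module.End K M} (hA : IsSkewAdjEnd Bf A)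
    {u v : M} {p q : K} (hu : A u = p • u) (hv : A v = q • v) (huv : Bf u v ≠ 0) : p = -q := by
  have h := hA u v
  rw [hu, hv, map_smul, LinearMap.smul_apply, map_smul, smul_eq_mul, smul_eq_mul] at h
  exact eq_neg_of_add_eq_zero_left
    ((mul_eq_zero.mp (show (p + q) * Bf u v = 0 by linear_combination h)).resolve_right huv)

theorem isNilpotent_wedgeEnd (hsymm : ∀ u v, Bf u v = Bf v u) {u₀ u₁ : M} {p q : K}
    (hβ : Bf u₀ u₁ = 0) (h₀ : wedgeEnd Bf u₁ u₀ u₀ = p • u₀) (h₁ : wedgeEnd Bf u₁ u₀ u₁ = q • u₁) :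
    IsNilpotent (wedgeEnd Bf u₁ u₀) := by
  -- The image of `wedgeEnd Bf u₁ u₀` lies in `⟨u₀, u₁⟩`, and it kills both `u₀` and `u₁`.
  have hpu : p • u₀ = 0 := by
    have h := congrArg (Bf u₀) h₀
    rw [wedgeEnd_apply, hsymm u₁, hβ] at h
    simp only [zero_smul, sub_zero, map_smul, hβ, smul_eq_mul, mul_zero] at h
    rcases mul_eq_zero.mp h.symm with h | h
    · rw [h, zero_smul]
    · rw [← h₀, wedgeEnd_apply, h, hsymm u₁, hβ, zero_smul, zero_smul, sub_zero]
  have hqu : q • u₁ = 0 := by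
    have h := congrArg (Bf u₁) h₁
    rw [wedgeEnd_apply, hβ] at h
    simp only [zero_smul, zero_sub, map_neg, map_smul, hsymm u₁ u₀, hβ, smul_eq_mul, mul_zero,
      neg_zero] at h
    rcases mul_eq_zero.mp h.symm with h | h
    · rw [h, zero_smul]
    · rw [← h₁, wedgeEnd_apply, h, hβ, zero_smul, zero_smul, sub_zero]
  refine ⟨2, LinearMap.ext fun m => ?_⟩
  rw [sq, Module.End.mul_apply, wedgeEnd_apply u₁ u₀ m, map_sub, map_smul, map_smul, h₀, h₁, hpu,
    hqu, smul_zero, smul_zero, sub_zero, LinearMap.zero_apply]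

theorem exists_eq_smul_of_wedgeEnd_apply_eq_neg_smul [CharZero K] {u₀ u₁ x : M}
    (hβ : Bf u₀ u₁ ≠ 0) (hQ₀ : Bf u₀ u₀ = 0) (hx : wedgeEnd Bf u₁ u₀ x = -(Bf u₀ u₁ • x)) :
    ∃ k : K, x = k • u₀ := by
  have h0 : Bf u₀ x = 0 := by
    have h := congrArg (Bf u₀) hx
    simp only [wedgeEnd_apply, map_sub, map_smul, map_neg, smul_eq_mul, hQ₀, mul_zero,
      sub_zero] at h
    have h2 : (2 * Bf u₀ u₁) * Bf u₀ x = 0 := by linear_combination h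
    exact (mul_eq_zero.mp h2).resolve_left (mul_ne_zero two_ne_zero hβ)
  refine ⟨Bf u₁ x / Bf u₀ u₁, ?_⟩
  rw [wedgeEnd_apply, h0, zero_smul, zero_sub, neg_inj] at hx
  rw [div_eq_inv_mul, mul_smul, hx, inv_smul_smul₀ hβ]

/-- `t` is a Cartan subalgebra of `so(M, Bf)` consisting of semisimple endomorphisms. -/
structure IsToralCartan (Bf : M →ₗ[K] M →ₗ[K] K) (t : Submodule K (Module.End K M)) : Prop where
  isSkewAdjEnd : ∀ x ∈ t, IsSkewAdjEnd Bf x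
  lie_eq_zero : ∀ x ∈ t, ∀ y ∈ t, ⁅x, y⁆ = 0
  mem_of_forall_lie_eq_zero : ∀ x, IsSkewAdjEnd Bf x → (∀ y ∈ t, ⁅x, y⁆ = 0) → x ∈ t
  isSemisimple : ∀ x ∈ t, x.IsSemisimple

theorem IsToralCartan.exists_eq_smul_of_forall_apply_eq_zero (hsymm : ∀ u v, Bf u v = Bf v u)
    {t : Submodule K (Module.End K M)} (ht : IsToralCartan Bf t) {u x : M}
    (hu : ∀ A ∈ t, A u = 0) (hQ : Bf u u ≠ 0) (hx : ∀ A ∈ t, A x = 0) : ∃ k : K, x = k • u := by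
  have hS : wedgeEnd Bf x u ∈ t := by
    refine ht.mem_of_forall_lie_eq_zero _ (isSkewAdjEnd_wedgeEnd hsymm x u) fun A hA => ?_
    rw [← lie_skew, lie_wedgeEnd hsymm (ht.isSkewAdjEnd A hA), hx A hA, hu A hA, map_zero,
      map_zero, LinearMap.zero_apply, add_zero, neg_zero]
  have h := hu _ hS
  rw [wedgeEnd_apply, sub_eq_zero] at h
  refine ⟨Bf x u / Bf u u, ?_⟩
  rw [div_eq_inv_mul, mul_smul, ← h, inv_smul_smul₀ hQ]

/-- The `χ`-weight space of `t` in `M₀ = ⟨w, w'⟩ᗮ`. -/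
def complWeightSpace (Bf : M →ₗ[K] M →ₗ[K] K) (w w' : M) (t : Submodule K (Module.End K M))
    (χ : Module.End K M → K) : Submodule K M where
  carrier := {x | Bf w x = 0 ∧ Bf w' x = 0 ∧ ∀ A ∈ t, A x = χ A • x}
  add_mem' := by
    rintro x y ⟨hx, hx', hxt⟩ ⟨hy, hy', hyt⟩
    exact ⟨by rw [map_add, hx, hy, add_zero], by rw [map_add, hx', hy', add_zero],
      fun A hA => by rw [map_add, hxt A hA, hyt A hA, smul_add]⟩
  zero_mem' := by simp
  smul_mem' := by
    rintro c x ⟨hx, hx', hxt⟩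
    exact ⟨by rw [map_smul, hx, smul_zero], by rw [map_smul, hx', smul_zero],
      fun A hA => by rw [map_smul, hxt A hA, smul_comm]⟩

theorem complWeightSpace_eq_span_of_anisotropic [CharZero K] (hsymm : ∀ u v, Bf u v = Bf v u)
    {w w' u₀ : M} {t : Submodule K (Module.End K M)} (ht : IsToralCartan Bf t)
    {χ : Module.End K M → K} (hu₀ : Bf w u₀ = 0) (hu₀' : Bf w' u₀ = 0) (hQ₀ : Bf u₀ u₀ ≠ 0)
    (hu₀t : ∀ A ∈ t, A u₀ = -χ A • u₀) :
    complWeightSpace Bf w w' t χ = K ∙ u₀ := by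
  have hχ : ∀ A ∈ t, χ A = 0 := fun A hA => neg_eq_zero.mp <| CharZero.eq_neg_self_iff.mp <|
    (ht.isSkewAdjEnd A hA).eq_neg_of_apply_eq_smul (hu₀t A hA) (hu₀t A hA) hQ₀
  have hu₀t₀ : ∀ A ∈ t, A u₀ = 0 := fun A hA => by rw [hu₀t A hA, hχ A hA, neg_zero, zero_smul]
  refine le_antisymm (fun x ⟨_, _, hxt⟩ => ?_) ((Submodule.span_singleton_le_iff_mem _ _).mpr
    ⟨hu₀, hu₀', fun A hA => by rw [hu₀t₀ A hA, hχ A hA, zero_smul]⟩)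
  obtain ⟨k, rfl⟩ := ht.exists_eq_smul_of_forall_apply_eq_zero hsymm hu₀t₀ hQ₀
    fun A hA => by rw [hxt A hA, hχ A hA, zero_smul]
  exact Submodule.smul_mem _ k (Submodule.mem_span_singleton_self u₀)

theorem wedgeEnd_apply_of_orthogonal {w w' v : M} (hv : Bf w v = 0) (hv' : Bf w' v = 0) :
    wedgeEnd Bf w' w v = (0 : K) • v := by
  simp [hv, hv']

structure IsHyperbolicPair (Bf : M →ₗ[K] M →ₗ[K] K) (w w' : M) : Prop where
  isotropic_left : Bf w w = 0
  isotropic_right : Bf w' w' = 0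
  apply_eq_one : Bf w w' = 1

namespace IsHyperbolicPair

variable {w w' : M}

theorem swap (hsymm : ∀ u v, Bf u v = Bf v u) (hp : IsHyperbolicPair Bf w w') :
    IsHyperbolicPair Bf w' w :=
  ⟨hp.isotropic_right, hp.isotropic_left, hsymm w w' ▸ hp.apply_eq_one⟩

theorem apply_wedgeEnd_left (hp : IsHyperbolicPair Bf w w') (m : M) :
    Bf w (wedgeEnd Bf w' w m) = Bf w m := by
  simp [hp.isotropic_left, hp.apply_eq_one]

theorem apply_wedgeEnd_right (hsymm : ∀ u v, Bf u v = Bf v u) (hp : IsHyperbolicPair Bf w w')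
    (m : M) : Bf w' (wedgeEnd Bf w' w m) = -Bf w' m := by
  simp [hp.isotropic_right, (hp.swap hsymm).apply_eq_one]

theorem eq_smul_of_wedgeEnd_apply_eq_self [CharZero K] (hsymm : ∀ u v, Bf u v = Bf v u)
    (hp : IsHyperbolicPair Bf w w') {m : M} (hm : wedgeEnd Bf w' w m = m) :
    m = Bf w m • w' := by
  have h : Bf w' m = 0 := by
    have := hp.apply_wedgeEnd_right hsymm m
    rwa [hm, CharZero.eq_neg_self_iff] at this
  calc m = wedgeEnd Bf w' w m := hm.symm
    _ = Bf w m • w' := by rw [wedgeEnd_apply, h, zero_smul, sub_zero]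

theorem eq_smul_of_wedgeEnd_apply_eq_neg [CharZero K] (hsymm : ∀ u v, Bf u v = Bf v u)
    (hp : IsHyperbolicPair Bf w w') {m : M} (hm : wedgeEnd Bf w' w m = -m) :
    m = Bf w' m • w := by
  refine (hp.swap hsymm).eq_smul_of_wedgeEnd_apply_eq_self hsymm ?_
  rw [wedgeEnd_swap, LinearMap.neg_apply, hm, neg_neg]

theorem orthogonal_of_wedgeEnd_apply_eq_zero (hsymm : ∀ u v, Bf u v = Bf v u)
    (hp : IsHyperbolicPair Bf w w') {m : M} (hm : wedgeEnd Bf w' w m = 0) :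
    Bf w m = 0 ∧ Bf w' m = 0 := by
  have h := hp.apply_wedgeEnd_left m
  have h' := hp.apply_wedgeEnd_right hsymm m
  rw [hm, map_zero] at h h'
  exact ⟨h.symm, neg_eq_zero.mp h'.symm⟩

theorem eq_zero_of_wedgeEnd_apply_eq_smul (hsymm : ∀ u v, Bf u v = Bf v u)
    (hp : IsHyperbolicPair Bf w w') {m : M} {c : K} (hm : wedgeEnd Bf w' w m = c • m)
    (hc₀ : c ≠ 0) (hc₁ : c ≠ 1) (hc₂ : c ≠ -1) : m = 0 := by
  have h := hp.apply_wedgeEnd_left m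
  have h' := hp.apply_wedgeEnd_right hsymm m
  rw [hm, map_smul, smul_eq_mul] at h h'
  have hw : Bf w m = 0 := by
    rcases mul_eq_zero.mp (show (c - 1) * Bf w m = 0 by linear_combination h) with h | h
    · exact absurd (sub_eq_zero.mp h) hc₁
    · exact h
  have hw' : Bf w' m = 0 := by
    rcases mul_eq_zero.mp (show (c + 1) * Bf w' m = 0 by linear_combination h') with h | h
    · exact absurd (eq_neg_of_add_eq_zero_left h) hc₂
    · exact h
  rw [wedgeEnd_apply, hw, hw', zero_smul, zero_smul, sub_zero] at hm
  exact (smul_eq_zero.mp hm.symm).resolve_left hc₀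

theorem ext_end (hsymm : ∀ u v, Bf u v = Bf v u) (hp : IsHyperbolicPair Bf w w')
    {F G : Module.End K M} (hw : F w = G w) (hw' : F w' = G w')
    (h₀ : ∀ v, Bf w v = 0 → Bf w' v = 0 → F v = G v) : F = G := by
  ext m
  set v := m - Bf w' m • w - Bf w m • w'
  have hv : F v = G v := h₀ v (by simp [v, hp.isotropic_left, hp.apply_eq_one])
    (by simp [v, hp.isotropic_right, (hp.swap hsymm).apply_eq_one])
  have hm : m = Bf w' m • w + Bf w m • w' + v := by simp only [v]; abel
  rw [hm, map_add, map_add, map_smul, map_smul, map_add, map_add, map_smul, map_smul, hw, hw', hv]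

theorem wedgeEnd_apply_left (hsymm : ∀ u v, Bf u v = Bf v u) (hp : IsHyperbolicPair Bf w w') :
    wedgeEnd Bf w' w w = (-1 : K) • w := by
  simp [hp.isotropic_left, (hp.swap hsymm).apply_eq_one]

theorem wedgeEnd_apply_right (hp : IsHyperbolicPair Bf w w') :
    wedgeEnd Bf w' w w' = (1 : K) • w' := by
  simp [hp.isotropic_right, hp.apply_eq_one]

theorem eq_wedgeEnd_of_isCompl (hsymm : ∀ u v, Bf u v = Bf v u) (hp : IsHyperbolicPair Bf w w')
    {M₀ : Submodule K M} (horth : ∀ v ∈ M₀, Bf w v = 0 ∧ Bf w' v = 0)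
    (hcompl : IsCompl (Submodule.span K {w, w'}) M₀) {D : Module.End K M} (hDw : D w = -w)
    (hDw' : D w' = w') (hD₀ : ∀ v ∈ M₀, D v = 0) : D = wedgeEnd Bf w' w := by
  have hspan : Submodule.span K ({w, w'} ∪ (M₀ : Set M)) = ⊤ := by
    rw [Submodule.span_union, Submodule.span_eq, hcompl.sup_eq_top]
  refine LinearMap.ext_on hspan ?_
  rintro v ((rfl | rfl) | hv)
  · rw [hDw, hp.wedgeEnd_apply_left hsymm, neg_one_smul]
  · rw [hDw', hp.wedgeEnd_apply_right, one_smul]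
  · rw [hD₀ v hv, wedgeEnd_apply_of_orthogonal (horth v hv).1 (horth v hv).2, zero_smul]

theorem eq_zero_of_lie_eq_neg_two_smul [CharZero K] (hsymm : ∀ u v, Bf u v = Bf v u)
    (hp : IsHyperbolicPair Bf w w') {F : Module.End K M} (hF : IsSkewAdjEnd Bf F)
    (hDF : ⁅wedgeEnd Bf w' w, F⁆ = (-2 : K) • F) : F = 0 := by
  have hD := Module.End.apply_eigenvector_of_lie_eq_smul hDF
  -- `F` lowers `D`-eigenvalues by `2`; `-3` and `-2` are not eigenvalues, and `F w'` lands in the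
  -- `(-1)`-eigenline `K w`, where skewness kills it.
  refine hp.ext_end hsymm ?_ ?_ fun v hv hv' => ?_ <;> rw [LinearMap.zero_apply]
  · exact hp.eq_zero_of_wedgeEnd_apply_eq_smul hsymm (hD (hp.wedgeEnd_apply_left hsymm))
      (by norm_num) (by norm_num) (by norm_num)
  · have hFw' := hp.eq_smul_of_wedgeEnd_apply_eq_neg hsymm
      (by rw [hD hp.wedgeEnd_apply_right]; norm_num)
    have h := hF w' w'
    rw [hsymm (F w')] at h
    rw [hFw', show Bf w' (F w') = 0 by linear_combination h / 2, zero_smul]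
  · exact hp.eq_zero_of_wedgeEnd_apply_eq_smul hsymm (hD (wedgeEnd_apply_of_orthogonal hv hv'))
      (by norm_num) (by norm_num) (by norm_num)

theorem eq_zero_of_lie_eq_two_smul [CharZero K] (hsymm : ∀ u v, Bf u v = Bf v u)
    (hp : IsHyperbolicPair Bf w w') {F : Module.End K M} (hF : IsSkewAdjEnd Bf F)
    (hDF : ⁅wedgeEnd Bf w' w, F⁆ = (2 : K) • F) : F = 0 := by
  refine (hp.swap hsymm).eq_zero_of_lie_eq_neg_two_smul hsymm hF ?_
  rw [wedgeEnd_swap, neg_lie, hDF, neg_smul]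

theorem exists_eq_wedgeEnd_of_lie_eq_neg [CharZero K] (hsymm : ∀ u v, Bf u v = Bf v u)
    (hp : IsHyperbolicPair Bf w w') {F : Module.End K M} (hF : IsSkewAdjEnd Bf F)
    (hDF : ⁅wedgeEnd Bf w' w, F⁆ = -F) :
    ∃ u, Bf w u = 0 ∧ Bf w' u = 0 ∧ F = wedgeEnd Bf u w := by
  rw [← neg_one_smul K F] at hDF
  have hD := Module.End.apply_eigenvector_of_lie_eq_smul hDF
  obtain ⟨hu, hu'⟩ := hp.orthogonal_of_wedgeEnd_apply_eq_zero hsymm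
    (by rw [hD hp.wedgeEnd_apply_right]; norm_num)
  refine ⟨F w', hu, hu', hp.ext_end hsymm ?_ ?_ fun v hv hv' => ?_⟩
  · rw [hp.eq_zero_of_wedgeEnd_apply_eq_smul hsymm (hD (hp.wedgeEnd_apply_left hsymm))
      (by norm_num) (by norm_num) (by norm_num)]
    simp [hp.isotropic_left, hsymm (F w') w, hu]
  · simp [hp.apply_eq_one, hsymm (F w') w', hu']
  · have hFv := hp.eq_smul_of_wedgeEnd_apply_eq_neg hsymm
      (by rw [hD (wedgeEnd_apply_of_orthogonal hv hv')]; norm_num)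
    have h := hF v w'
    rw [hsymm (F v)] at h
    rw [hFv, show Bf w' (F v) = -Bf (F w') v by rw [hsymm (F w')]; linear_combination h]
    simp [hv]

theorem exists_eq_wedgeEnd_of_lie_eq_self [CharZero K] (hsymm : ∀ u v, Bf u v = Bf v u)
    (hp : IsHyperbolicPair Bf w w') {F : Module.End K M} (hF : IsSkewAdjEnd Bf F)
    (hDF : ⁅wedgeEnd Bf w' w, F⁆ = F) :
    ∃ u, Bf w' u = 0 ∧ Bf w u = 0 ∧ F = wedgeEnd Bf u w' := by
  refine (hp.swap hsymm).exists_eq_wedgeEnd_of_lie_eq_neg hsymm hF ?_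
  rw [wedgeEnd_swap, neg_lie, hDF]

theorem apply_eq_of_lie_eq_zero [CharZero K] (hsymm : ∀ u v, Bf u v = Bf v u)
    (hp : IsHyperbolicPair Bf w w') {F : Module.End K M} (hF : IsSkewAdjEnd Bf F)
    (hDF : ⁅wedgeEnd Bf w' w, F⁆ = 0) :
    F w' = Bf w (F w') • w' ∧ F w = -(Bf w (F w') • w) := by
  rw [← zero_smul K F] at hDF
  have hD := Module.End.apply_eigenvector_of_lie_eq_smul hDF
  refine ⟨hp.eq_smul_of_wedgeEnd_apply_eq_self hsymm
    (by rw [hD hp.wedgeEnd_apply_right]; norm_num), ?_⟩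
  have hFw := hp.eq_smul_of_wedgeEnd_apply_eq_neg hsymm
    (by rw [hD (hp.wedgeEnd_apply_left hsymm)]; norm_num)
  have h := hF w w'
  rw [hFw, show Bf w' (F w) = -Bf w (F w') by rw [hsymm]; linear_combination h, neg_smul]

theorem apply_of_mem_torus [CharZero K] (hsymm : ∀ u v, Bf u v = Bf v u)
    (hp : IsHyperbolicPair Bf w w') {t : Submodule K (Module.End K M)} (ht : IsToralCartan Bf t)
    (hDt : wedgeEnd Bf w' w ∈ t) {A : Module.End K M} (hA : A ∈ t) :
    A w' = Bf w (A w') • w' ∧ A w = -(Bf w (A w') • w) :=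
  hp.apply_eq_of_lie_eq_zero hsymm (ht.isSkewAdjEnd A hA) (ht.lie_eq_zero _ hDt A hA)

theorem orthogonal_apply_of_mem_torus [CharZero K] (hsymm : ∀ u v, Bf u v = Bf v u)
    (hp : IsHyperbolicPair Bf w w') {t : Submodule K (Module.End K M)} (ht : IsToralCartan Bf t)
    (hDt : wedgeEnd Bf w' w ∈ t) {A : Module.End K M} (hA : A ∈ t) {x : M} (hx : Bf w x = 0)
    (hx' : Bf w' x = 0) : Bf w (A x) = 0 ∧ Bf w' (A x) = 0 := by
  refine hp.orthogonal_of_wedgeEnd_apply_eq_zero hsymm ?_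
  have hDA : ⁅wedgeEnd Bf w' w, A⁆ = (0 : K) • A := by rw [ht.lie_eq_zero _ hDt A hA, zero_smul]
  rw [Module.End.apply_eigenvector_of_lie_eq_smul hDA (wedgeEnd_apply_of_orthogonal hx hx'),
    add_zero, zero_smul]

theorem lie_wedgeEnd_eq_smul_iff (hsymm : ∀ u v, Bf u v = Bf v u) (hp : IsHyperbolicPair Bf w w')
    {A : Module.End K M} (hA : IsSkewAdjEnd Bf A) {η c : K} (hAw' : A w' = η • w')
    (hAw : A w = -(η • w)) {u : M} (hu' : Bf w' u = 0) :
    ⁅A, wedgeEnd Bf u w⁆ = c • wedgeEnd Bf u w ↔ A u = (η + c) • u := by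
  constructor
  · intro h
    have h' := LinearMap.congr_fun h w'
    simp only [Module.End.bracket_apply, hAw', map_smul, wedgeEnd_apply, hp.apply_eq_one,
      hsymm u w', hu', LinearMap.smul_apply, one_smul, zero_smul, sub_zero] at h'
    linear_combination (norm := module) h'
  · intro h
    rw [lie_wedgeEnd hsymm hA, h, hAw, map_smul, map_neg, map_smul, LinearMap.smul_apply]
    module

theorem wedgeEnd_mem_rootSet_iff [CharZero K] (hsymm : ∀ u v, Bf u v = Bf v u)
    (hp : IsHyperbolicPair Bf w w') {t : Submodule K (Module.End K M)} (ht : IsToralCartan Bf t)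
    (hDt : wedgeEnd Bf w' w ∈ t) {β : Module.End K M →ₗ[K] K} {x : M} (hx' : Bf w' x = 0) :
    wedgeEnd Bf x w ∈ rootSet Bf t β ↔ ∀ A ∈ t, A x = (Bf w (A w') + β A) • x := by
  simp only [rootSet, Set.mem_ofPred_eq, isSkewAdjEnd_wedgeEnd hsymm, true_and]
  refine forall₂_congr fun A hA => ?_
  obtain ⟨hAw', hAw⟩ := hp.apply_of_mem_torus hsymm ht hDt hA
  exact hp.lie_wedgeEnd_eq_smul_iff hsymm (ht.isSkewAdjEnd A hA) hAw' hAw hx'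

theorem wedgeEnd_right_mem_rootSet_iff [CharZero K] (hsymm : ∀ u v, Bf u v = Bf v u)
    (hp : IsHyperbolicPair Bf w w') {t : Submodule K (Module.End K M)} (ht : IsToralCartan Bf t)
    (hDt : wedgeEnd Bf w' w ∈ t) {β : Module.End K M →ₗ[K] K} {x : M} (hx : Bf w x = 0) :
    wedgeEnd Bf x w' ∈ rootSet Bf t β ↔ ∀ A ∈ t, A x = (β A - Bf w (A w')) • x := by
  have hDt' : wedgeEnd Bf w w' ∈ t := by rw [wedgeEnd_swap]; exact neg_mem hDt
  rw [(hp.swap hsymm).wedgeEnd_mem_rootSet_iff hsymm ht hDt' hx]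
  refine forall₂_congr fun A hA => ?_
  obtain ⟨hAw', hAw⟩ := hp.apply_of_mem_torus hsymm ht hDt hA
  rw [hAw, map_neg, map_smul, (hp.swap hsymm).apply_eq_one, smul_eq_mul, mul_one, neg_add_eq_sub]

theorem lie_wedgeEnd_wedgeEnd (hsymm : ∀ u v, Bf u v = Bf v u) (hp : IsHyperbolicPair Bf w w')
    {u₀ u₁ : M} (hu₀' : Bf w' u₀ = 0) (hu₁ : Bf w u₁ = 0) :
    ⁅wedgeEnd Bf u₀ w, wedgeEnd Bf u₁ w'⁆ = wedgeEnd Bf u₁ u₀ + Bf u₀ u₁ • wedgeEnd Bf w' w := by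
  rw [lie_wedgeEnd hsymm (isSkewAdjEnd_wedgeEnd hsymm u₀ w)]
  ext m
  simp only [wedgeEnd_apply, hu₁, hp.apply_eq_one, hsymm u₀ w', hu₀', LinearMap.add_apply,
    map_smul, LinearMap.smul_apply, zero_smul, one_smul, sub_zero, zero_sub, map_neg,
    LinearMap.neg_apply]
  module

theorem complWeightSpace_eq_span_of_isotropic [CharZero K] (hsymm : ∀ u v, Bf u v = Bf v u)
    (hp : IsHyperbolicPair Bf w w') {t : Submodule K (Module.End K M)} (ht : IsToralCartan Bf t)
    (hDt : wedgeEnd Bf w' w ∈ t) {χ : Module.End K M → K} {u₀ u₁ : M} (hu₀ : Bf w u₀ = 0)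
    (hu₀' : Bf w' u₀ = 0) (hβ : Bf u₀ u₁ ≠ 0) (hQ₀ : Bf u₀ u₀ = 0)
    (hHt : wedgeEnd Bf u₁ u₀ + Bf u₀ u₁ • wedgeEnd Bf w' w ∈ t)
    (hχH : χ (wedgeEnd Bf u₁ u₀ + Bf u₀ u₁ • wedgeEnd Bf w' w) = -Bf u₀ u₁)
    (hu₁t : ∀ A ∈ t, A u₁ = -χ A • u₁) :
    complWeightSpace Bf w w' t χ = K ∙ u₀ := by
  set H := wedgeEnd Bf u₁ u₀ + Bf u₀ u₁ • wedgeEnd Bf w' w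
  have hH : ∀ x, Bf w x = 0 → Bf w' x = 0 → H x = -(Bf u₀ u₁ • x) → ∃ k : K, x = k • u₀ :=
    fun x hx hx' h => exists_eq_smul_of_wedgeEnd_apply_eq_neg_smul hβ hQ₀ (by
      simpa [H, hx, hx'] using h)
  have hHu₀ : H u₀ = -(Bf u₀ u₁ • u₀) := by simp [H, hQ₀, hsymm u₁ u₀, hu₀, hu₀']
  have hu₀t : u₀ ∈ complWeightSpace Bf w w' t χ := by
    refine ⟨hu₀, hu₀', fun A hA => ?_⟩
    obtain ⟨hAu₀, hAu₀'⟩ := hp.orthogonal_apply_of_mem_torus hsymm ht hDt hA hu₀ hu₀'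
    obtain ⟨k, hk⟩ := hH (A u₀) hAu₀ hAu₀' (by
      have h := LinearMap.congr_fun (ht.lie_eq_zero H hHt A hA) u₀
      rw [Module.End.bracket_apply, hHu₀, map_neg, map_smul, LinearMap.zero_apply, sub_eq_zero] at h
      exact h)
    rw [hk, (ht.isSkewAdjEnd A hA).eq_neg_of_apply_eq_smul hk (hu₁t A hA) hβ, neg_neg]
  refine le_antisymm (fun x ⟨hx, hx', hxt⟩ => ?_)
    ((Submodule.span_singleton_le_iff_mem _ _).mpr hu₀t)
  obtain ⟨k, rfl⟩ := hH x hx hx' (by rw [hxt H hHt, hχH, neg_smul])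
  exact Submodule.smul_mem _ k (Submodule.mem_span_singleton_self u₀)

theorem complWeightSpace_eq_span_of_bf_ne_zero [CharZero K] (hsymm : ∀ u v, Bf u v = Bf v u)
    (hp : IsHyperbolicPair Bf w w') {t : Submodule K (Module.End K M)} (ht : IsToralCartan Bf t)
    (hDt : wedgeEnd Bf w' w ∈ t) {α : Module.End K M →ₗ[K] K} {u₀ u₁ : M} (hu₀ : Bf w u₀ = 0)
    (hu₀' : Bf w' u₀ = 0) (hβ : Bf u₀ u₁ ≠ 0)
    (hu₁t : ∀ A ∈ t, A u₁ = (α A - Bf w (A w')) • u₁)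
    (hHt : wedgeEnd Bf u₁ u₀ + Bf u₀ u₁ • wedgeEnd Bf w' w ∈ t) {p : K}
    (hHu₀ : (wedgeEnd Bf u₁ u₀ + Bf u₀ u₁ • wedgeEnd Bf w' w) u₀ = p • u₀) :
    complWeightSpace Bf w w' t (fun A => Bf w (A w') - α A) = K ∙ u₀ := by
  set β := Bf u₀ u₁
  set H := wedgeEnd Bf u₁ u₀ + β • wedgeEnd Bf w' w
  have hηH : Bf w (H w') = β := by
    simp [H, hsymm u₀ w', hu₀', hu₀, hp.apply_eq_one, hp.isotropic_right]
  have hpH : p = -(α H - β) :=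
    (ht.isSkewAdjEnd H hHt).eq_neg_of_apply_eq_smul hHu₀ (by rw [hu₁t H hHt, hηH]) hβ
  have hQ : Bf u₀ u₀ • u₁ = (p + β) • u₀ := by
    have h : H u₀ = Bf u₀ u₀ • u₁ - β • u₀ := by simp [H, hsymm u₁ u₀, hu₀, hu₀', β]
    rw [h] at hHu₀
    linear_combination (norm := module) hHu₀
  by_cases hQ₀ : Bf u₀ u₀ = 0
  · have hp0 : p + β = 0 := by
      rw [hQ₀, zero_smul] at hQ
      exact (smul_eq_zero.mp hQ.symm).resolve_right fun h0 => hβ (by simp [β, h0])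
    refine hp.complWeightSpace_eq_span_of_isotropic hsymm ht hDt hu₀ hu₀' hβ hQ₀ hHt ?_
      fun A hA => by rw [hu₁t A hA, neg_sub]
    show Bf w (H w') - α H = -β
    rw [hηH]
    linear_combination hp0 - hpH
  · set s := (Bf u₀ u₀)⁻¹ * (p + β)
    have hs : u₁ = s • u₀ := by rw [mul_smul, ← hQ, inv_smul_smul₀ hQ₀]
    have hs0 : s ≠ 0 := by
      intro h0
      rw [h0, zero_smul] at hs
      exact hβ (by simp [β, hs])
    refine complWeightSpace_eq_span_of_anisotropic hsymm ht hu₀ hu₀' hQ₀ fun A hA => ?_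
    have h := hu₁t A hA
    rw [hs, map_smul, smul_comm] at h
    rw [smul_right_injective M hs0 h, neg_sub]

theorem complWeightSpace_eq_span [CharZero K] (hsymm : ∀ u v, Bf u v = Bf v u)
    (hp : IsHyperbolicPair Bf w w') {t : Submodule K (Module.End K M)} (ht : IsToralCartan Bf t)
    (hDt : wedgeEnd Bf w' w ∈ t) {α : Module.End K M →ₗ[K] K} {u₀ u₁ : M} (hu₀ : Bf w u₀ = 0)
    (hu₀' : Bf w' u₀ = 0) (hu₁ : Bf w u₁ = 0) (hY : wedgeEnd Bf u₁ w' ∈ rootSet Bf t α)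
    (hHt : ⁅wedgeEnd Bf u₀ w, wedgeEnd Bf u₁ w'⁆ ∈ t)
    (hH : ⁅wedgeEnd Bf u₀ w, wedgeEnd Bf u₁ w'⁆ ≠ 0) {c : K}
    (hHX : ⁅⁅wedgeEnd Bf u₀ w, wedgeEnd Bf u₁ w'⁆, wedgeEnd Bf u₀ w⁆ = c • wedgeEnd Bf u₀ w) :
    complWeightSpace Bf w w' t (fun A => Bf w (A w') - α A) = K ∙ u₀ := by
  rw [hp.lie_wedgeEnd_wedgeEnd hsymm hu₀' hu₁] at hHt hH hHX
  rw [hp.wedgeEnd_right_mem_rootSet_iff hsymm ht hDt hu₁] at hY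
  obtain ⟨hHw', hHw⟩ := hp.apply_of_mem_torus hsymm ht hDt hHt
  have hHu₀ := (hp.lie_wedgeEnd_eq_smul_iff hsymm (ht.isSkewAdjEnd _ hHt) hHw' hHw hu₀').mp hHX
  refine hp.complWeightSpace_eq_span_of_bf_ne_zero hsymm ht hDt hu₀ hu₀' (fun hβ => ?_) hY
    hHt hHu₀
  have hHu₁ := hY _ hHt
  rw [hβ, zero_smul, add_zero] at hHt hH hHu₀ hHu₁
  exact hH (Module.End.eq_zero_of_isNilpotent_isSemisimple (isNilpotent_wedgeEnd hsymm hβ hHu₀ hHu₁)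
    (ht.isSemisimple _ hHt))

theorem lie_eq_neg_of_lie_lie_add_eq_zero [CharZero K] (hsymm : ∀ u v, Bf u v = Bf v u)
    (hp : IsHyperbolicPair Bf w w') {F : Module.End K M} (hF : IsSkewAdjEnd Bf F)
    (h : ⁅wedgeEnd Bf w' w, ⁅wedgeEnd Bf w' w, F⁆⁆ + (3 : K) • ⁅wedgeEnd Bf w' w, F⁆ +
      (2 : K) • F = 0) :
    ⁅wedgeEnd Bf w' w, F⁆ = -F := by
  have hG := ((isSkewAdjEnd_wedgeEnd hsymm w' w).lie hF).add hF
  refine eq_neg_of_add_eq_zero_left (hp.eq_zero_of_lie_eq_neg_two_smul hsymm hG ?_)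
  rw [lie_add]
  linear_combination (norm := module) h

theorem apply_eq_one_of_mem_rootSet [CharZero K] (hsymm : ∀ u v, Bf u v = Bf v u)
    (hp : IsHyperbolicPair Bf w w') {t : Submodule K (Module.End K M)}
    (hDt : wedgeEnd Bf w' w ∈ t) {α : Module.End K M →ₗ[K] K}
    (hαpos : α (wedgeEnd Bf w' w) = 1 ∨ α (wedgeEnd Bf w' w) = 2) {Y : Module.End K M}
    (hY : Y ∈ rootSet Bf t α) (hY0 : Y ≠ 0) : α (wedgeEnd Bf w' w) = 1 :=
  hαpos.resolve_right fun h2 =>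
    hY0 (hp.eq_zero_of_lie_eq_two_smul hsymm hY.1 (by rw [hY.2 _ hDt, h2]))

theorem rootSet_neg_eq [CharZero K] (hsymm : ∀ u v, Bf u v = Bf v u)
    (hp : IsHyperbolicPair Bf w w') {t : Submodule K (Module.End K M)} (ht : IsToralCartan Bf t)
    (hDt : wedgeEnd Bf w' w ∈ t) {α : Module.End K M →ₗ[K] K} (hαD : α (wedgeEnd Bf w' w) = 1) :
    rootSet Bf t (-α) =
      (wedgeEnd Bf).flip w '' complWeightSpace Bf w w' t (fun A => Bf w (A w') - α A) := by
  ext z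
  constructor
  · intro hz
    obtain ⟨x, hx, hx', rfl⟩ := hp.exists_eq_wedgeEnd_of_lie_eq_neg hsymm hz.1
      (by rw [hz.2 _ hDt, LinearMap.neg_apply, hαD, neg_one_smul])
    refine ⟨x, ⟨hx, hx', fun A hA => ?_⟩, rfl⟩
    rw [(hp.wedgeEnd_mem_rootSet_iff hsymm ht hDt hx').mp hz A hA, LinearMap.neg_apply,
      ← sub_eq_add_neg]
  · rintro ⟨x, ⟨-, hx', hxt⟩, rfl⟩
    refine (hp.wedgeEnd_mem_rootSet_iff hsymm ht hDt hx').mpr fun A hA => ?_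
    rw [hxt A hA, LinearMap.neg_apply, ← sub_eq_add_neg]

end IsHyperbolicPair

end

theorem stmt_5 {K M : Type*} [Field K] [CharZero K]
    [AddCommGroup M] [Module K M]
    (Bf : M →ₗ[K] M →ₗ[K] K) (hsymm : ∀ u v, Bf u v = Bf v u)
    (w w' : M) (M₀ : Submodule K M)
    (hww : Bf w w = 0) (hw'w' : Bf w' w' = 0) (hww' : Bf w w' = 1)
    (horth : ∀ v ∈ M₀, Bf w v = 0 ∧ Bf w' v = 0)
    (hcompl : IsCompl (Submodule.span K {w, w'}) M₀)
    -- the semisimple element `D = dν` of `so(M)`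
    (D : Module.End K M) (hDw : D w = -w) (hDw' : D w' = w') (hD₀ : ∀ v ∈ M₀, D v = 0)
    -- `t` is a Cartan subalgebra of `so(M, Bf)` containing `D`:
    (t : Submodule K (Module.End K M))
    (htso : ∀ x ∈ t, IsSkewAdjEnd Bf x)
    (hDt : D ∈ t)
    (htab : ∀ x ∈ t, ∀ y ∈ t, ⁅x, y⁆ = 0)
    (htmax : ∀ x : Module.End K M, IsSkewAdjEnd Bf x → (∀ y ∈ t, ⁅x, y⁆ = 0) → x ∈ t)
    (htss : ∀ x ∈ t, Module.End.IsSemisimple x)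
    -- `α` is a root, positive relative to `ν` (its root space lies in `Lie U_{SO(M),ν}`):
    (α : Module.End K M →ₗ[K] K)
    (hαpos : α D = 1 ∨ α D = 2)
    -- `h` is a one-dimensional subalgebra of `Lie U_{SO(M), ν⁻¹}`:
    (h : Submodule K (Module.End K M))
    (hdim : Module.finrank K ↥h = 1)
    (hneg : ∀ x ∈ h, IsSkewAdjEnd Bf x ∧
      ⁅D, ⁅D, x⁆⁆ + (3 : K) • ⁅D, x⁆ + (2 : K) • x = 0)
    -- (1) `[h, so(M)_α]` is a one-dimensional subalgebra of the Cartan `t`: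
    (hT1 : Module.finrank K
      ↥(Submodule.span K {z : Module.End K M |
        ∃ x ∈ h, ∃ y ∈ rootSet Bf t α, z = ⁅x, y⁆}) = 1)
    (hTt : Submodule.span K {z : Module.End K M |
        ∃ x ∈ h, ∃ y ∈ rootSet Bf t α, z = ⁅x, y⁆} ≤ t)
    -- (2) `[[h, so(M)_α], h] ⊆ h`:
    (hT2 : ∀ z ∈ Submodule.span K {z : Module.End K M |
        ∃ x ∈ h, ∃ y ∈ rootSet Bf t α, z = ⁅x, y⁆}, ∀ x ∈ h, ⁅z, x⁆ ∈ h) :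
    (h : Set (Module.End K M)) = rootSet Bf t (-α) := by
  have hp : IsHyperbolicPair Bf w w' := ⟨hww, hw'w', hww'⟩
  obtain rfl := hp.eq_wedgeEnd_of_isCompl hsymm horth hcompl hDw hDw' hD₀
  have ht : IsToralCartan Bf t := ⟨htso, htab, htmax, htss⟩
  obtain ⟨_, ⟨X, hXh, Y, hYα, rfl⟩, hH⟩ : ∃ z ∈ {z : Module.End K M |
      ∃ x ∈ h, ∃ y ∈ rootSet Bf t α, z = ⁅x, y⁆}, z ≠ 0 := by
    by_contra! hS
    rw [Submodule.span_eq_bot.mpr hS, finrank_bot] at hT1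
    exact zero_ne_one hT1
  have hHt := hTt (Submodule.subset_span ⟨X, hXh, Y, hYα, rfl⟩)
  have hspan := eq_span_singleton_of_mem_of_finrank_eq_one hdim hXh
    (by rintro rfl; exact hH (by simp [Ring.lie_def]))
  obtain ⟨c, hc⟩ := Submodule.mem_span_singleton.mp
    (hspan ▸ hT2 _ (Submodule.subset_span ⟨X, hXh, Y, hYα, rfl⟩) X hXh)
  have hαD := hp.apply_eq_one_of_mem_rootSet hsymm hDt hαpos hYα
    (by rintro rfl; exact hH (by simp [Ring.lie_def]))
  obtain ⟨u₀, hu₀, hu₀', rfl⟩ := hp.exists_eq_wedgeEnd_of_lie_eq_neg hsymm (hneg X hXh).1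
    (hp.lie_eq_neg_of_lie_lie_add_eq_zero hsymm (hneg X hXh).1 (hneg X hXh).2)
  obtain ⟨u₁, -, hu₁, rfl⟩ := hp.exists_eq_wedgeEnd_of_lie_eq_self hsymm hYα.1
    (by rw [hYα.2 _ hDt, hαD, one_smul])
  rw [hp.rootSet_neg_eq hsymm ht hDt hαD,
    hp.complWeightSpace_eq_span hsymm ht hDt hu₀ hu₀' hu₁ hYα hHt hH hc.symm, hspan,
    ← Submodule.map_coe, Submodule.map_span, Set.image_singleton, LinearMap.flip_apply]
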